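/- arXiv:2111.09069 — 2 statements merged into one kernel-verified Lean document; each statement's English description precedes it below -/
import Mathlib

section
/- Let λ > 1 and δ > 0, and consider the two curves Q(η) (concave: Q'' < 0 on η < 0, Q decreasing) and R_δ(η) = (1/√λ)·√(η² + δ(λ-1)) (strictly convex in η). Suppose that for some δ* > 0 and η* < 0 one has Q(η*) = R_{δ*}(η*) and Q'(η*) = R_{δ*}'(η*). Then the pair (η*, δ*) is the unique solution of this tangency system among η < 0 and δ > 0, η* is the unique solution of λ·Q(η)·Q'(η) = η, and δ* = (λ·Q(η*)² - η*²)/(λ - 1). -/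
/-!
If `l·Q(a)·Q'(a) = a`, the tangent line to `Q` at `a` is `x ↦ (c_a + a x)/(l Q(a))` with
`c_a = l Q(a)² - a²`. Positivity of `Q` forces `c_a ≥ 0` (otherwise the tangent line, which
lies above `Q`, vanishes at a negative point), so `(√l Q(a), a)` lies in the closed future
cone of the Lorentz form `⟪(u, x), (v, y)⟫ = uv - xy`. Strict concavity at two distinct roots
`a, b` gives `⟪p_a, p_b⟫ < min(⟪p_a, p_a⟫, ⟪p_b, p_b⟫)`, contradicting the reverse
Cauchy–Schwarz inequality on that cone. Tangency with the hyperbola `R_δ` makes `η` such a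
root and determines `δ` through `l Q(η)² = η² + δ(l-1)`.
-/

open Real Set

theorem strictConcaveOn_of_hasDerivAt2_neg {U : Set ℝ} (hU : Convex ℝ U) (hUo : IsOpen U)
    {f f' f'' : ℝ → ℝ} (hf : ∀ x ∈ U, HasDerivAt f (f' x) x)
    (hf' : ∀ x ∈ U, HasDerivAt f' (f'' x) x) (hf'' : ∀ x ∈ U, f'' x < 0) :
    StrictConcaveOn ℝ U f := by
  have hanti : StrictAntiOn f' U :=
    strictAntiOn_of_hasDerivWithinAt_neg hU
      (fun x hx => (hf' x hx).continuousAt.continuousWithinAt)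
      (fun x hx => (hf' x (interior_subset hx)).hasDerivWithinAt)
      (fun x hx => hf'' x (interior_subset hx))
  refine StrictAntiOn.strictConcaveOn_of_deriv hU
    (fun x hx => (hf x hx).continuousAt.continuousWithinAt) ?_
  rw [hUo.interior_eq]
  intro a ha b hb hab
  rw [(hf a ha).deriv, (hf b hb).deriv]
  exact hanti ha hb hab

theorem StrictConcaveOn.apply_lt_tangent {S : Set ℝ} {f : ℝ → ℝ} {f' x y : ℝ}
    (hfc : StrictConcaveOn ℝ S f) (hx : x ∈ S) (hy : y ∈ S) (hxy : x ≠ y)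
    (hf : HasDerivAt f f' x) : f y < f x + f' * (y - x) := by
  rcases hxy.lt_or_gt with h | h
  · have hslope := hfc.slope_lt_of_hasDerivAt hx hy h hf
    rw [slope_def_field, div_lt_iff₀ (sub_pos.2 h)] at hslope
    linarith
  · have hslope := hfc.lt_slope_of_hasDerivAt hy hx h hf
    rw [slope_def_field, lt_div_iff₀ (sub_pos.2 h)] at hslope
    linarith

theorem min_le_lorentz_inner {l u v x y : ℝ} (hl : 0 ≤ l) (hu : 0 ≤ u) (hv : 0 ≤ v)
    (hx : x ^ 2 ≤ l * u ^ 2) (hy : y ^ 2 ≤ l * v ^ 2) :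
    min (l * u ^ 2 - x ^ 2) (l * v ^ 2 - y ^ 2) ≤ l * u * v - x * y := by
  have hxy : x * y ≤ l * u * v := by
    have hsq : (x * y) ^ 2 ≤ (l * u * v) ^ 2 := by
      calc (x * y) ^ 2 = x ^ 2 * y ^ 2 := by ring
        _ ≤ (l * u ^ 2) * (l * v ^ 2) := mul_le_mul hx hy (sq_nonneg y) (by positivity)
        _ = (l * u * v) ^ 2 := by ring
    exact (abs_le_of_sq_le_sq' hsq (by positivity)).2
  have hgram : (l * u ^ 2 - x ^ 2) * (l * v ^ 2 - y ^ 2) ≤ (l * u * v - x * y) ^ 2 := by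
    nlinarith [mul_nonneg hl (sq_nonneg (u * y - v * x))]
  by_contra! hlt
  have hA := (min_le_left _ _).trans_lt' hlt
  have hB := (min_le_right _ _).trans_lt' hlt
  nlinarith [mul_lt_mul'' hA hB (by linarith) (by linarith)]

theorem tangency_hyperbola {l m q q' η : ℝ} (hl : 0 < l) (hm : 0 < m)
    (hq : q = 1 / √l * √m) (hq' : q' = η / (√l * √m)) :
    l * q * q' = η ∧ l * q ^ 2 = m := by
  have hsl : √l ≠ 0 := (sqrt_pos.2 hl).ne'
  have hsm : √m ≠ 0 := (sqrt_pos.2 hm).ne'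
  subst hq hq'
  constructor
  · field_simp
    rw [sq_sqrt hl.le]
  · field_simp
    rw [sq_sqrt hl.le, sq_sqrt hm.le]

section CriticalPoint

variable {l : ℝ} {Q Q' : ℝ → ℝ} (hl : 0 < l) (hQ : StrictConcaveOn ℝ (Iio 0) Q)
  (hQd : ∀ η : ℝ, η < 0 → HasDerivAt Q (Q' η) η) (hQpos : ∀ η : ℝ, η < 0 → 0 < Q η)
include hl hQ hQd hQpos

theorem mul_lt_of_mul_deriv_eq {a b : ℝ} (ha : a < 0) (hb : b < 0) (hab : a ≠ b)
    (hroot : l * Q a * Q' a = a) :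
    l * Q a * Q b < l * Q a ^ 2 - a ^ 2 + a * b := by
  have htangent := hQ.apply_lt_tangent ha hb hab (hQd a ha)
  have hlQ : 0 < l * Q a := mul_pos hl (hQpos a ha)
  nlinarith [mul_lt_mul_of_pos_left htangent hlQ]

theorem sq_le_of_mul_deriv_eq {a : ℝ} (ha : a < 0) (hroot : l * Q a * Q' a = a) :
    a ^ 2 ≤ l * Q a ^ 2 := by
  by_contra! hc
  have hlQ2 : 0 < l * Q a ^ 2 := mul_pos hl (pow_pos (hQpos a ha) 2)
  -- the tangent line at `a` vanishes at `b`
  set b := (a ^ 2 - l * Q a ^ 2) / a with hb_def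
  have hb : b < 0 := div_neg_of_pos_of_neg (by linarith) ha
  have hab : a < b := by
    rw [hb_def, lt_div_iff_of_neg ha]
    nlinarith
  have hzero : a * b = a ^ 2 - l * Q a ^ 2 := by
    rw [hb_def]
    field_simp [ha.ne]
  have hlt := mul_lt_of_mul_deriv_eq hl hQ hQd hQpos ha hb hab.ne hroot
  nlinarith [mul_pos (mul_pos hl (hQpos a ha)) (hQpos b hb)]

theorem eq_of_mul_deriv_eq {a b : ℝ} (ha : a < 0) (hb : b < 0)
    (hroot_a : l * Q a * Q' a = a) (hroot_b : l * Q b * Q' b = b) : a = b := by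
  by_contra hab
  have hlt_a := mul_lt_of_mul_deriv_eq hl hQ hQd hQpos ha hb hab hroot_a
  have hlt_b := mul_lt_of_mul_deriv_eq hl hQ hQd hQpos hb ha (Ne.symm hab) hroot_b
  have hmin := min_le_lorentz_inner hl.le (hQpos a ha).le (hQpos b hb).le
    (sq_le_of_mul_deriv_eq hl hQ hQd hQpos ha hroot_a)
    (sq_le_of_mul_deriv_eq hl hQ hQd hQpos hb hroot_b)
  have hlt : l * Q a * Q b - a * b < min (l * Q a ^ 2 - a ^ 2) (l * Q b ^ 2 - b ^ 2) :=
    lt_min (by linarith) (by linarith)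
  linarith

end CriticalPoint

theorem saddle_node_tangency_unique_general
    (l : ℝ) (hl : 1 < l) (Q Q' Q'' : ℝ → ℝ)
    (hQd : ∀ η : ℝ, η < 0 → HasDerivAt Q (Q' η) η)
    (hQd' : ∀ η : ℝ, η < 0 → HasDerivAt Q' (Q'' η) η)
    (hQpos : ∀ η : ℝ, η < 0 → 0 < Q η)
    (hQ''neg : ∀ η : ℝ, η < 0 → Q'' η < 0)
    (ηs δs : ℝ) (hηs : ηs < 0) (hδs : 0 < δs)
    (hval : Q ηs = (1 / Real.sqrt l) * Real.sqrt (ηs^2 + δs * (l - 1)))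
    (hder : Q' ηs = ηs / (Real.sqrt l * Real.sqrt (ηs^2 + δs * (l - 1)))) :
    (∀ η δ : ℝ, η < 0 → 0 < δ →
      Q η = (1 / Real.sqrt l) * Real.sqrt (η^2 + δ * (l - 1)) →
      Q' η = η / (Real.sqrt l * Real.sqrt (η^2 + δ * (l - 1))) →
      η = ηs ∧ δ = δs)
    ∧ (l * Q ηs * Q' ηs = ηs
        ∧ ∀ η : ℝ, η < 0 → l * Q η * Q' η = η → η = ηs)
    ∧ δs = (l * (Q ηs)^2 - ηs^2) / (l - 1) := by
  have hl0 : 0 < l := zero_lt_one.trans hl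
  have hl1 : 0 < l - 1 := sub_pos.2 hl
  have hQ : StrictConcaveOn ℝ (Iio 0) Q :=
    strictConcaveOn_of_hasDerivAt2_neg (convex_Iio 0) isOpen_Iio hQd hQd' hQ''neg
  obtain ⟨hroot_s, hsq_s⟩ := tangency_hyperbola hl0 (by positivity) hval hder
  have hroot_unique : ∀ η : ℝ, η < 0 → l * Q η * Q' η = η → η = ηs := fun η hη hroot =>
    eq_of_mul_deriv_eq hl0 hQ hQd hQpos hη hηs hroot hroot_s
  refine ⟨fun η δ hη hδ hv hd => ?_, ⟨hroot_s, hroot_unique⟩, ?_⟩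
  · obtain ⟨hroot, hsq⟩ := tangency_hyperbola hl0 (by positivity) hv hd
    obtain rfl := hroot_unique η hη hroot
    exact ⟨rfl, mul_right_cancel₀ hl1.ne' (by linarith)⟩
  · rw [eq_div_iff hl1.ne']
    linarith

/-- Tangency between a concave decreasing positive curve `Q` and the convex family
`R_δ(η) = (1/√λ)√(η² + δ(λ-1))`, `λ > 1`: if `(η*, δ*)` is a tangency point (equal values
and equal derivatives) with `η* < 0`, `δ* > 0`, then it is the unique such tangency,
`η*` is the unique solution of `λ·Q(η)·Q'(η) = η` among `η < 0`, and
`δ* = (λ·Q(η*)² - η*²)/(λ-1)`. -/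
theorem saddle_node_tangency_unique
    (l : ℝ) (hl : 1 < l) (Q Q' Q'' : ℝ → ℝ)
    (hQd : ∀ η : ℝ, η < 0 → HasDerivAt Q (Q' η) η)
    (hQd' : ∀ η : ℝ, η < 0 → HasDerivAt Q' (Q'' η) η)
    (hQpos : ∀ η : ℝ, η < 0 → 0 < Q η)
    (hQ'neg : ∀ η : ℝ, η < 0 → Q' η < 0)
    (hQ''neg : ∀ η : ℝ, η < 0 → Q'' η < 0)
    (ηs δs : ℝ) (hηs : ηs < 0) (hδs : 0 < δs)
    (hval : Q ηs = (1 / Real.sqrt l) * Real.sqrt (ηs^2 + δs * (l - 1)))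
    (hder : Q' ηs = ηs / (Real.sqrt l * Real.sqrt (ηs^2 + δs * (l - 1)))) :
    (∀ η δ : ℝ, η < 0 → 0 < δ →
      Q η = (1 / Real.sqrt l) * Real.sqrt (η^2 + δ * (l - 1)) →
      Q' η = η / (Real.sqrt l * Real.sqrt (η^2 + δ * (l - 1))) →
      η = ηs ∧ δ = δs)
    ∧ (l * Q ηs * Q' ηs = ηs
        ∧ ∀ η : ℝ, η < 0 → l * Q η * Q' η = η → η = ηs)
    ∧ δs = (l * (Q ηs)^2 - ηs^2) / (l - 1) :=
  saddle_node_tangency_unique_general l hl Q Q' Q'' hQd hQd' hQpos hQ''neg ηs δs hηs hδs hval hder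
end

section
/- Consider the Riccati system ẋ = 1, ẏ = x + y² with return map Q₀(x₀) = x₀ + t(x₀) for x₀ < 0, and define f(x₀) = u² - 2xu + x²v evaluated at (t(x₀), x₀), where u,v are the first and second variational solutions. Then f'(x₀) = x(t(x₀),x₀)² · (dv/dx₀)(t(x₀),x₀); i.e. in the total derivative of f along the return time, all terms except the one coming from the derivative of v cancel. -/
/-! With `X = t(x₀) + x₀`, `U = u(t(x₀), x₀)`, `V = v(t(x₀), x₀)` write
`f = (U - X)² + X²(V - 1)`. At the return time `y = 0`, so `U' = t' + V` and `U' - X' = V - 1`;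
the derivative of `f` is then `2(V - 1)(U + X t') + X² V'`, and `X t' = -U` kills the first
term. -/

theorem HasDerivAt.sq_sub_two_mul_mul_add_sq_mul {U X V : ℝ → ℝ} {U' X' V' x : ℝ}
    (hU : HasDerivAt U U' x) (hX : HasDerivAt X X' x) (hV : HasDerivAt V V' x) :
    HasDerivAt (fun z => U z ^ 2 - 2 * X z * U z + X z ^ 2 * V z)
      (2 * (U x - X x) * (U' - X') + 2 * X x * X' * (V x - 1) + X x ^ 2 * V') x := by
  refine (((hU.pow 2).sub ((hX.const_mul 2).mul hU)).add ((hX.pow 2).mul hV)).congr_deriv ?_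
  simp only [Nat.cast_ofNat, Pi.pow_apply]
  ring

theorem riccati_f_derivative_general
    (y u v : ℝ → ℝ → ℝ) (t : ℝ → ℝ) (x₀ t' Vd : ℝ)
    (hret : y (t x₀) x₀ = 0)
    (hxpos : 0 < t x₀ + x₀)
    (ht'val : t' = -(u (t x₀) x₀) / (t x₀ + x₀))
    (ht : HasDerivAt t t' x₀)
    (hU : HasDerivAt (fun z => u (t z) z)
      ((1 + 2 * y (t x₀) x₀ * u (t x₀) x₀) * t' + v (t x₀) x₀) x₀)
    (hV : HasDerivAt (fun z => v (t z) z) Vd x₀) :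
    HasDerivAt (fun z => (u (t z) z)^2 - 2 * (t z + z) * u (t z) z
        + (t z + z)^2 * v (t z) z)
      ((t x₀ + x₀)^2 * Vd) x₀ := by
  have hX : HasDerivAt (fun z => t z + z) (t' + 1) x₀ := ht.add (hasDerivAt_id x₀)
  have hXt' : (t x₀ + x₀) * t' = -u (t x₀) x₀ := by
    rw [ht'val]
    field_simp [hxpos.ne']
  refine (hU.sq_sub_two_mul_mul_add_sq_mul hX hV).congr_deriv ?_
  rw [hret]
  linear_combination 2 * (v (t x₀) x₀ - 1) * hXt'

/-- Riccati system ẋ = 1, ẏ = x + y²: the total derivative of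
`f(x₀) = u² - 2xu + x²v` evaluated at `(t(x₀),x₀)` is
`f'(x₀) = x(t(x₀),x₀)² · (d/dx₀)[v(t(x₀),x₀)]`: all other terms cancel. -/
theorem riccati_f_derivative
    (y u v : ℝ → ℝ → ℝ) (t : ℝ → ℝ) (x₀ t' Vd : ℝ) (hx₀ : x₀ < 0)
    (hret : y (t x₀) x₀ = 0)
    (hxpos : 0 < t x₀ + x₀)
    (ht'val : t' = -(u (t x₀) x₀) / (t x₀ + x₀))
    (ht : HasDerivAt t t' x₀)
    (hU : HasDerivAt (fun z => u (t z) z)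
      ((1 + 2 * y (t x₀) x₀ * u (t x₀) x₀) * t' + v (t x₀) x₀) x₀)
    (hV : HasDerivAt (fun z => v (t z) z) Vd x₀) :
    HasDerivAt (fun z => (u (t z) z)^2 - 2 * (t z + z) * u (t z) z
        + (t z + z)^2 * v (t z) z)
      ((t x₀ + x₀)^2 * Vd) x₀ :=
  riccati_f_derivative_general y u v t x₀ t' Vd hret hxpos ht'val ht hU hV
end
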